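/- Let m_0, m_1, m_2 be Hessenberg functions on [n] satisfying condition (2) of the modular law at index i (that is: m_1(i+1)=m_1(i)+1, no j has m_1(j)=i, and for k∈{0,2}, m_k(j)=m_1(j) for j≠i,i+1, while m_0(i)=m_0(i+1)=m_1(i) and m_2(i)=m_2(i+1)=m_1(i+1)). Then for every linear operator T on F_q^n, (1+q)·|H(m_1,T)| = q·|H(m_0,T)| + |H(m_2,T)|. -/

import Mathlib

/-- The q-analog `[m]_q = 1 + q + ⋯ + q^(m-1)`. -/
def qInt (q m : ℕ) : ℕ := ∑ j ∈ Finset.range m, q ^ j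

/-- The q-factorial `[k]_q! = ∏_{j=1}^k [j]_q`. -/
def qFact (q k : ℕ) : ℕ := ∏ j ∈ Finset.range k, qInt q (j + 1)

/-- A complete flag `0 = V 0 ⊆ V 1 ⊆ ⋯ ⊆ V n = F^n` with `dim (V i) = i`. -/
def IsFlag (F : Type) [Field F] (n : ℕ) (V : ℕ → Submodule F (Fin n → F)) : Prop :=
  V 0 = ⊥ ∧ V n = ⊤ ∧ (∀ i, V i ≤ V (i + 1)) ∧ ∀ i, i ≤ n → Module.finrank F ↥(V i) = i

/-- A Hessenberg function on `[n]` (with values queried at `1,…,n`). -/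
def IsHess (n : ℕ) (m : ℕ → ℕ) : Prop :=
  (∀ i, 1 ≤ i → i ≤ n → i ≤ m i ∧ m i ≤ n) ∧
  ∀ i j, 1 ≤ i → i ≤ j → j ≤ n → m i ≤ m j

/-- The set of `F_q`-points of the Hessenberg variety `H(m, T)`. -/
def Hess (F : Type) [Field F] (n : ℕ) (m : ℕ → ℕ) (T : Module.End F (Fin n → F)) :
    Set (ℕ → Submodule F (Fin n → F)) :=
  {V | IsFlag F n V ∧ ∀ i, 1 ≤ i → i ≤ n → (V i).map T ≤ V (m i)}

/-!
Forgetting the `i`-th space of a flag maps each `H(mₖ, T)` into the image `P` of `H(m₂, T)`, so it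
suffices to compare fibres. Over the image of `V ∈ H(m₂, T)` the fibre consists of the
`i`-dimensional `U` with `V (i-1) ≤ U ≤ V (i+1)` (the `q + 1` points of a projective line)
subject to `T U ≤ V (mₖ i)`. For `m₂` this is automatic. If `T (V (i+1)) ≤ V (m₁ i)` it is
automatic for `m₁` and `m₀` as well; otherwise the `m₀`-fibre is empty and the `m₁`-fibre is the
single space `V (i+1) ⊓ T⁻¹ (V (m₁ i))`, of codimension one in `V (i+1)` because
`T (V (i+1)) ≤ V (m₁ i + 1)`. Fibrewise, `(1+q)(q+1) = q(q+1) + (q+1)` and `(1+q)·1 = q·0 + (q+1)`.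
-/

open Module Submodule Function

section Subspaces

variable {F : Type*} [Field F] {M N : Type*} [AddCommGroup M] [Module F M]
  [AddCommGroup N] [Module F N]

theorem Submodule.finrank_map_add_finrank_inf_ker (f : M →ₗ[F] N) (B : Submodule F M)
    [FiniteDimensional F B] :
    finrank F (B.map f) + finrank F ↥(B ⊓ LinearMap.ker f) = finrank F B := by
  rw [← (f.domRestrict B).finrank_range_add_finrank_ker, LinearMap.range_domRestrict,
    LinearMap.ker_domRestrict, ← finrank_map_subtype_eq, map_comap_subtype]

theorem Submodule.finrank_map_mkQ_add_finrank {A U : Submodule F M} [FiniteDimensional F U]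
    (h : A ≤ U) : finrank F (U.map A.mkQ) + finrank F A = finrank F U := by
  rw [← finrank_map_add_finrank_inf_ker A.mkQ U, ker_mkQ, inf_eq_right.2 h]

theorem Submodule.ncard_setOf_le_finrank_eq (P : Submodule F M) (k : ℕ) :
    {L : Submodule F M | L ≤ P ∧ finrank F L = k}.ncard =
      {L : Submodule F P | finrank F L = k}.ncard := by
  rw [← Set.ncard_image_of_injective _ (map_injective_of_injective P.injective_subtype)]
  congr 1
  ext L
  constructor
  · rintro ⟨hLP, hL⟩
    refine ⟨L.comap P.subtype, ?_, ?_⟩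
    · rwa [Set.mem_ofPred_eq, ← finrank_map_subtype_eq, map_comap_subtype, inf_eq_right.2 hLP]
    · rw [map_comap_subtype, inf_eq_right.2 hLP]
  · rintro ⟨L, hL, rfl⟩
    exact ⟨map_subtype_le P L, (finrank_map_subtype_eq P L).trans hL⟩

theorem Submodule.ncard_setOf_le_le_finrank_eq [FiniteDimensional F M] {A B : Submodule F M}
    (hAB : A ≤ B) (k : ℕ) :
    {U : Submodule F M | A ≤ U ∧ U ≤ B ∧ finrank F U = finrank F A + k}.ncard =
      {L : Submodule F (M ⧸ A) | L ≤ B.map A.mkQ ∧ finrank F L = k}.ncard := by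
  have hinj : Set.InjOn (map A.mkQ) {U | A ≤ U} :=
    fun U (hU : A ≤ U) U' (hU' : A ≤ U') h => by
    simpa [comap_map_mkQ, sup_eq_right.2 hU, sup_eq_right.2 hU'] using congrArg (comap A.mkQ) h
  rw [← (hinj.mono fun U hU => hU.1).ncard_image]
  congr 1
  ext L
  constructor
  · rintro ⟨U, ⟨hAU, hUB, hU⟩, rfl⟩
    exact ⟨map_mono hUB, by have := finrank_map_mkQ_add_finrank hAU; omega⟩
  · rintro ⟨hLB, hL⟩
    have hAU : A ≤ L.comap A.mkQ := fun x hx => by simp [(Quotient.mk_eq_zero A).2 hx]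
    have hmap : (L.comap A.mkQ).map A.mkQ = L := map_comap_eq_of_surjective A.mkQ_surjective L
    refine ⟨L.comap A.mkQ, ⟨hAU, ?_, ?_⟩, hmap⟩
    · simpa [comap_map_mkQ, sup_eq_right.2 hAB] using comap_mono (f := A.mkQ) hLB
    · have := finrank_map_mkQ_add_finrank hAU
      rw [hmap] at this
      omega

theorem Submodule.ncard_setOf_finrank_eq_one [Finite F] (h : finrank F M = 2) :
    {L : Submodule F M | finrank F L = 1}.ncard = Nat.card F + 1 := by
  rw [← Nat.card_coe_set_eq, ← Projectivization.card_of_finrank_two F M h]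
  exact Nat.card_congr (Projectivization.equivSubmodule F M).symm

theorem Submodule.ncard_setOf_le_le_finrank_eq_succ [Finite F] [FiniteDimensional F M]
    {A B : Submodule F M} (hAB : A ≤ B) (hB : finrank F B = finrank F A + 2) :
    {U : Submodule F M | A ≤ U ∧ U ≤ B ∧ finrank F U = finrank F A + 1}.ncard =
      Nat.card F + 1 := by
  have hQ : finrank F (B.map A.mkQ) = 2 := by
    have := finrank_map_mkQ_add_finrank hAB
    omega
  rw [ncard_setOf_le_le_finrank_eq hAB, ncard_setOf_le_finrank_eq,
    ncard_setOf_finrank_eq_one hQ]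

theorem Submodule.setOf_le_le_finrank_eq_map_le_eq_singleton [FiniteDimensional F M]
    {T : M →ₗ[F] M} {A B R R' : Submodule F M} (hAB : A ≤ B)
    (hB : finrank F B = finrank F A + 2) (hRR' : R ≤ R') (hR' : finrank F R' ≤ finrank F R + 1)
    (hTA : A.map T ≤ R) (hTB : B.map T ≤ R') (hTB' : ¬ B.map T ≤ R) :
    {U : Submodule F M | A ≤ U ∧ U ≤ B ∧ finrank F U = finrank F A + 1 ∧ U.map T ≤ R} =
      {B ⊓ R.comap T} := by
  set K := B ⊓ R.comap T
  have hK : B ⊓ LinearMap.ker (R.mkQ ∘ₗ T) = K := by rw [LinearMap.ker_comp, ker_mkQ]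
  have himage : finrank F (B.map (R.mkQ ∘ₗ T)) ≤ 1 :=
    calc finrank F (B.map (R.mkQ ∘ₗ T)) ≤ finrank F (R'.map R.mkQ) :=
          finrank_mono (by rw [map_comp]; exact map_mono hTB)
      _ ≤ 1 := by have := finrank_map_mkQ_add_finrank hRR'; omega
  have hKB : K < B :=
    lt_of_le_of_ne inf_le_left fun h => hTB' (h ▸ map_le_iff_le_comap.2 inf_le_right)
  have hKB' := finrank_lt_finrank_of_lt hKB
  have hrank := finrank_map_add_finrank_inf_ker (R.mkQ ∘ₗ T) B
  rw [hK] at hrank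
  ext U
  constructor
  · rintro ⟨-, hUB, hU, hTU⟩
    exact eq_of_le_of_finrank_le (le_inf hUB (map_le_iff_le_comap.1 hTU)) (by omega)
  · rintro rfl
    exact ⟨le_inf hAB (map_le_iff_le_comap.1 hTA), inf_le_left, by omega,
      map_le_iff_le_comap.2 inf_le_right⟩

end Subspaces

theorem Set.ncard_eq_sum_ncard_fiber {α β : Type*} [DecidableEq β] {s : Set α} (hs : s.Finite)
    {f : α → β} {t : Finset β} (hf : Set.MapsTo f s t) :
    s.ncard = ∑ b ∈ t, {a ∈ s | f a = b}.ncard := by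
  rw [Set.ncard_eq_toFinset_card s hs, Finset.card_eq_sum_card_fiberwise (by simpa using hf)]
  refine Finset.sum_congr rfl fun b _ => ?_
  rw [← Set.ncard_coe_finset]
  congr 1
  ext a
  simp

theorem Function.ncard_setOf_update_eq_update {ι β : Type*} [DecidableEq ι] (s : Set (ι → β))
    (y : ι → β) (i : ι) (b : β) :
    {x ∈ s | update x i b = update y i b}.ncard = {u | update y i u ∈ s}.ncard := by
  rw [← Set.ncard_image_of_injective _ (update_injective y i)]
  congr 1
  ext x
  constructor
  · rintro ⟨hx, h⟩
    have hxy : update y i (x i) = x := by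
      funext j
      rcases eq_or_ne j i with rfl | hji
      · simp
      · simpa [hji] using (congrFun h j).symm
    exact ⟨x i, by rwa [Set.mem_ofPred_eq, hxy], hxy⟩
  · rintro ⟨u, hu, rfl⟩
    exact ⟨hu, by simp⟩

section Flags

variable {F : Type} [Field F] {n i : ℕ} {m : ℕ → ℕ} {T : Module.End F (Fin n → F)}
  {V : ℕ → Submodule F (Fin n → F)}

theorem IsFlag.monotone (hV : IsFlag F n V) : Monotone V :=
  monotone_nat_of_le_succ hV.2.2.1

theorem IsFlag.eq_top (hV : IsFlag F n V) {j : ℕ} (hj : n ≤ j) : V j = ⊤ :=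
  top_le_iff.1 (hV.2.1 ▸ hV.monotone hj)

theorem IsFlag.finrank_eq (hV : IsFlag F n V) {j : ℕ} (hj : j ≤ n) : finrank F (V j) = j :=
  hV.2.2.2 j hj

theorem finite_hess [Finite F] (n : ℕ) (m : ℕ → ℕ) (T : Module.End F (Fin n → F)) :
    (Hess F n m T).Finite := by
  refine Set.Finite.of_finite_image (f := fun V (j : Fin (n + 1)) => V j) (Set.toFinite _) ?_
  intro V hV V' hV' h
  funext j
  rcases le_or_gt j n with hj | hj
  · exact congrFun h ⟨j, by omega⟩
  · rw [hV.1.eq_top hj.le, hV'.1.eq_top hj.le]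

theorem hess_subset_hess {m' : ℕ → ℕ} (h : ∀ j, m j ≤ m' j) :
    Hess F n m T ⊆ Hess F n m' T :=
  fun _ hV => ⟨hV.1, fun j hj hjn => (hV.2 j hj hjn).trans (hV.1.monotone (h j))⟩

theorem IsFlag.update_iff (hV : IsFlag F n V) (hi : 1 ≤ i) (hin : i < n)
    (U : Submodule F (Fin n → F)) :
    IsFlag F n (update V i U) ↔ V (i - 1) ≤ U ∧ U ≤ V (i + 1) ∧ finrank F U = i := by
  have hpred : i - 1 + 1 = i := Nat.sub_add_cancel hi
  constructor
  · rintro ⟨-, -, hmono, hrank⟩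
    refine ⟨?_, ?_, by rw [← update_self i U V]; exact hrank i hin.le⟩
    · simpa [update_of_ne (by omega : i - 1 ≠ i), hpred] using hmono (i - 1)
    · simpa using hmono i
  · rintro ⟨hlow, hup, hrank⟩
    refine ⟨by rw [update_of_ne (by omega)]; exact hV.1,
      by rw [update_of_ne (by omega)]; exact hV.2.1, fun j => ?_, fun j hj => ?_⟩
    · rcases eq_or_ne j i with rfl | hji
      · simpa using hup
      rcases eq_or_ne (j + 1) i with rfl | hji'
      · simpa [hji] using hlow
      simpa [hji, hji'] using hV.2.2.1 j
    · rcases eq_or_ne j i with rfl | hji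
      · rwa [update_self]
      · rw [update_of_ne hji]; exact hV.finrank_eq hj

theorem update_mem_hess_iff (hV : IsFlag F n V) (hi : 1 ≤ i) (hin : i < n)
    (hm : ∀ j, 1 ≤ j → j ≤ n → m j ≠ i) (U : Submodule F (Fin n → F)) :
    update V i U ∈ Hess F n m T ↔
      (V (i - 1) ≤ U ∧ U ≤ V (i + 1) ∧ finrank F U = i ∧ U.map T ≤ V (m i)) ∧
        ∀ j, 1 ≤ j → j ≤ n → j ≠ i → (V j).map T ≤ V (m j) := by
  have hupd : ∀ j, 1 ≤ j → j ≤ n → update V i U (m j) = V (m j) :=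
    fun j hj hjn => update_of_ne (hm j hj hjn) _ _
  simp only [Hess, Set.mem_ofPred_eq, hV.update_iff hi hin]
  constructor
  · rintro ⟨⟨hlow, hup, hrank⟩, hT⟩
    refine ⟨⟨hlow, hup, hrank, by simpa [hupd i hi hin.le] using hT i hi hin.le⟩,
      fun j hj hjn hji => ?_⟩
    simpa [hupd j hj hjn, hji] using hT j hj hjn
  · rintro ⟨⟨hlow, hup, hrank, hTU⟩, hT⟩
    refine ⟨⟨hlow, hup, hrank⟩, fun j hj hjn => ?_⟩
    rw [hupd j hj hjn]
    rcases eq_or_ne j i with rfl | hji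
    · simpa using hTU
    · simpa [hji] using hT j hj hjn hji

theorem ncard_update_mem_hess_of_map_le [Finite F] (hV : IsFlag F n V) (hi : 1 ≤ i)
    (hin : i < n) (hm : ∀ j, 1 ≤ j → j ≤ n → m j ≠ i)
    (hoff : ∀ j, 1 ≤ j → j ≤ n → j ≠ i → (V j).map T ≤ V (m j))
    (hT : (V (i + 1)).map T ≤ V (m i)) :
    {U | update V i U ∈ Hess F n m T}.ncard = Nat.card F + 1 := by
  have hlow : finrank F (V (i - 1)) = i - 1 := hV.finrank_eq (by omega)
  have hup : finrank F (V (i + 1)) = i + 1 := hV.finrank_eq hin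
  have hfiber : {U | update V i U ∈ Hess F n m T} =
      {U | V (i - 1) ≤ U ∧ U ≤ V (i + 1) ∧ finrank F U = finrank F (V (i - 1)) + 1} := by
    ext U
    simp only [Set.mem_ofPred_eq, update_mem_hess_iff hV hi hin hm, hlow, Nat.sub_add_cancel hi]
    exact ⟨fun ⟨⟨h1, h2, h3, _⟩, _⟩ => ⟨h1, h2, h3⟩,
      fun ⟨h1, h2, h3⟩ => ⟨⟨h1, h2, h3, (map_mono h2).trans hT⟩, hoff⟩⟩
  rw [hfiber, ncard_setOf_le_le_finrank_eq_succ (hV.monotone (by omega)) (by omega)]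

theorem ncard_update_mem_hess_of_not_map_le (hV : IsFlag F n V) (hi : 1 ≤ i) (hin : i < n)
    (hHess : IsHess n m) (hm : ∀ j, 1 ≤ j → j ≤ n → m j ≠ i) (hsucc : m (i + 1) = m i + 1)
    (hoff : ∀ j, 1 ≤ j → j ≤ n → j ≠ i → (V j).map T ≤ V (m j))
    (hT : ¬ (V (i + 1)).map T ≤ V (m i)) :
    {U | update V i U ∈ Hess F n m T}.ncard = 1 := by
  have hlow : finrank F (V (i - 1)) = i - 1 := hV.finrank_eq (by omega)
  have hup : finrank F (V (i + 1)) = i + 1 := hV.finrank_eq hin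
  have hmn : m i + 1 ≤ n := hsucc ▸ (hHess.1 (i + 1) (by omega) hin).2
  have hTlow : (V (i - 1)).map T ≤ V (m i) := by
    rcases eq_or_ne i 1 with rfl | hi1
    · simp [hV.1]
    · exact (hoff (i - 1) (by omega) (by omega) (by omega)).trans
        (hV.monotone (hHess.2 _ _ (by omega) (by omega) hin.le))
  have hsingle := setOf_le_le_finrank_eq_map_le_eq_singleton
    (hV.monotone (by omega : i - 1 ≤ i + 1)) (by omega) (hV.monotone (Nat.le_add_right (m i) 1))
    (by rw [hV.finrank_eq hmn, hV.finrank_eq (by omega)]) hTlow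
    (by rw [← hsucc]; exact hoff (i + 1) (by omega) hin (by omega)) hT
  rw [hlow, Nat.sub_add_cancel hi] at hsingle
  have hfiber : {U | update V i U ∈ Hess F n m T} =
      {U | V (i - 1) ≤ U ∧ U ≤ V (i + 1) ∧ finrank F U = i ∧ U.map T ≤ V (m i)} := by
    ext U
    simp only [Set.mem_ofPred_eq, update_mem_hess_iff hV hi hin hm]
    exact ⟨And.left, fun h => ⟨h, hoff⟩⟩
  rw [hfiber, hsingle, Set.ncard_singleton]

end Flags

/-- Condition (2) of the modular law at `i`, with `m₁` a Hessenberg function. -/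
structure IsModularTriple (n i : ℕ) (m₀ m₁ m₂ : ℕ → ℕ) : Prop where
  isHess₁ : IsHess n m₁
  one_le : 1 ≤ i
  lt : i < n
  succ_eq : m₁ (i + 1) = m₁ i + 1
  ne : ∀ j, 1 ≤ j → j ≤ n → m₁ j ≠ i
  off : ∀ j, j ≠ i → j ≠ i + 1 → m₀ j = m₁ j ∧ m₂ j = m₁ j
  left : m₀ i = m₁ i ∧ m₀ (i + 1) = m₁ i
  right : m₂ i = m₁ (i + 1) ∧ m₂ (i + 1) = m₁ (i + 1)

namespace IsModularTriple

variable {n i : ℕ} {m₀ m₁ m₂ : ℕ → ℕ}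

theorem m₀_le_m₁_and_m₁_le_m₂ (h : IsModularTriple n i m₀ m₁ m₂) (j : ℕ) :
    m₀ j ≤ m₁ j ∧ m₁ j ≤ m₂ j := by
  have := h.succ_eq; have := h.left; have := h.right
  rcases eq_or_ne j i with rfl | hji
  · omega
  rcases eq_or_ne j (i + 1) with rfl | hji'
  · omega
  have := h.off j hji hji'
  omega

theorem m₀_ne_and_m₂_ne (h : IsModularTriple n i m₀ m₁ m₂) {j : ℕ} (hj : 1 ≤ j) (hjn : j ≤ n) :
    m₀ j ≠ i ∧ m₂ j ≠ i := by
  have := h.succ_eq; have := h.left; have := h.right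
  have := h.ne j hj hjn; have := h.ne i h.one_le h.lt.le
  have := (h.isHess₁.1 i h.one_le h.lt.le).1
  rcases eq_or_ne j i with rfl | hji
  · omega
  rcases eq_or_ne j (i + 1) with rfl | hji'
  · omega
  have := h.off j hji hji'
  omega

theorem m₂_eq (h : IsModularTriple n i m₀ m₁ m₂) {j : ℕ} (hj : j ≠ i) : m₂ j = m₁ j := by
  rcases eq_or_ne j (i + 1) with rfl | hji'
  · exact h.right.2
  · exact (h.off j hj hji').2

variable {F : Type} [Field F] {T : Module.End F (Fin n → F)} {V : ℕ → Submodule F (Fin n → F)}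

theorem card_mul_ncard_update_mem_hess [Finite F] (h : IsModularTriple n i m₀ m₁ m₂)
    (hV : V ∈ Hess F n m₂ T) :
    (1 + Nat.card F) * {U | update V i U ∈ Hess F n m₁ T}.ncard =
      Nat.card F * {U | update V i U ∈ Hess F n m₀ T}.ncard +
        {U | update V i U ∈ Hess F n m₂ T}.ncard := by
  obtain ⟨hflag, hT⟩ := hV
  have hoff₁ : ∀ j, 1 ≤ j → j ≤ n → j ≠ i → (V j).map T ≤ V (m₁ j) :=
    fun j hj hjn hji => h.m₂_eq hji ▸ hT j hj hjn
  have hcount₂ := ncard_update_mem_hess_of_map_le hflag h.one_le h.lt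
    (fun j hj hjn => (h.m₀_ne_and_m₂_ne hj hjn).2) (fun j hj hjn _ => hT j hj hjn)
    (by rw [h.right.1, ← h.right.2]; exact hT (i + 1) (by omega) h.lt)
  by_cases hc : (V (i + 1)).map T ≤ V (m₁ i)
  · have hoff₀ : ∀ j, 1 ≤ j → j ≤ n → j ≠ i → (V j).map T ≤ V (m₀ j) := by
      intro j hj hjn hji
      rcases eq_or_ne j (i + 1) with rfl | hji'
      · rwa [h.left.2]
      · rw [(h.off j hji hji').1]; exact hoff₁ j hj hjn hji
    rw [ncard_update_mem_hess_of_map_le hflag h.one_le h.lt h.ne hoff₁ hc,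
      ncard_update_mem_hess_of_map_le hflag h.one_le h.lt
        (fun j hj hjn => (h.m₀_ne_and_m₂_ne hj hjn).1) hoff₀ (h.left.1 ▸ hc), hcount₂]
    ring
  · have hempty₀ : {U | update V i U ∈ Hess F n m₀ T} = ∅ := by
      refine Set.eq_empty_of_forall_notMem fun U hU => hc ?_
      have hU₀ := (update_mem_hess_iff hflag h.one_le h.lt
        (fun j hj hjn => (h.m₀_ne_and_m₂_ne hj hjn).1) U).1 hU
      rw [← h.left.2]
      exact hU₀.2 (i + 1) (by omega) h.lt (by omega)
    rw [ncard_update_mem_hess_of_not_map_le hflag h.one_le h.lt h.isHess₁ h.ne h.succ_eq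
      hoff₁ hc, hempty₀, Set.ncard_empty, hcount₂]
    ring

end IsModularTriple

theorem stmt7_general (F : Type) [Field F] [Fintype F] (n : ℕ)
    (m₀ m₁ m₂ : ℕ → ℕ) (h₁ : IsHess n m₁)
    (i : ℕ) (hi1 : 1 ≤ i) (hin : i ≤ n - 1)
    (ha : m₁ (i + 1) = m₁ i + 1)
    (hb : ∀ j, 1 ≤ j → j ≤ n → m₁ j ≠ i)
    (hoff : ∀ j, j ≠ i → j ≠ i + 1 → m₀ j = m₁ j ∧ m₂ j = m₁ j)
    (h0i : m₀ i = m₁ i ∧ m₀ (i + 1) = m₁ i)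
    (h2i : m₂ i = m₁ (i + 1) ∧ m₂ (i + 1) = m₁ (i + 1))
    (T : Module.End F (Fin n → F)) :
    (1 + Fintype.card F) * (Hess F n m₁ T).ncard =
      Fintype.card F * (Hess F n m₀ T).ncard + (Hess F n m₂ T).ncard := by
  classical
  have h : IsModularTriple n i m₀ m₁ m₂ := ⟨h₁, hi1, by omega, ha, hb, hoff, h0i, h2i⟩
  let forget : (ℕ → Submodule F (Fin n → F)) → ℕ → Submodule F (Fin n → F) :=
    fun V => update V i ⊥
  let P := ((finite_hess n m₂ T).image forget).toFinset
  have hfibers : ∀ m, Hess F n m T ⊆ Hess F n m₂ T →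
      (Hess F n m T).ncard = ∑ W ∈ P, {V ∈ Hess F n m T | forget V = W}.ncard :=
    fun m hm => Set.ncard_eq_sum_ncard_fiber (finite_hess n m T)
      fun V hV => by simpa [P] using ⟨V, hm hV, rfl⟩
  have hsub₀₁ := hess_subset_hess (F := F) (T := T) fun j => (h.m₀_le_m₁_and_m₁_le_m₂ j).1
  have hsub₁₂ := hess_subset_hess (F := F) (T := T) fun j => (h.m₀_le_m₁_and_m₁_le_m₂ j).2
  rw [← Nat.card_eq_fintype_card, hfibers m₁ hsub₁₂, hfibers m₀ (hsub₀₁.trans hsub₁₂),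
    hfibers m₂ subset_rfl, Finset.mul_sum, Finset.mul_sum, ← Finset.sum_add_distrib]
  refine Finset.sum_congr rfl fun W hW => ?_
  obtain ⟨V, hV, rfl⟩ : ∃ V ∈ Hess F n m₂ T, forget V = W := by simpa [P] using hW
  simp only [forget, ncard_setOf_update_eq_update]
  exact h.card_mul_ncard_update_mem_hess hV

/-- The modular law, condition (2): if `m₀, m₁, m₂` are Hessenberg functions related by
condition (2) at index `i`, then `(1+q)|H(m₁,T)| = q|H(m₀,T)| + |H(m₂,T)|`. -/
theorem stmt7 (F : Type) [Field F] [Fintype F] (n : ℕ)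
    (m₀ m₁ m₂ : ℕ → ℕ) (h₀ : IsHess n m₀) (h₁ : IsHess n m₁) (h₂ : IsHess n m₂)
    (i : ℕ) (hi1 : 1 ≤ i) (hin : i ≤ n - 1)
    (ha : m₁ (i + 1) = m₁ i + 1)
    (hb : ∀ j, 1 ≤ j → j ≤ n → m₁ j ≠ i)
    (hoff : ∀ j, j ≠ i → j ≠ i + 1 → m₀ j = m₁ j ∧ m₂ j = m₁ j)
    (h0i : m₀ i = m₁ i ∧ m₀ (i + 1) = m₁ i)
    (h2i : m₂ i = m₁ (i + 1) ∧ m₂ (i + 1) = m₁ (i + 1))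
    (T : Module.End F (Fin n → F)) :
    (1 + Fintype.card F) * (Hess F n m₁ T).ncard =
      Fintype.card F * (Hess F n m₀ T).ncard + (Hess F n m₂ T).ncard :=
  stmt7_general F n m₀ m₁ m₂ h₁ i hi1 hin ha hb hoff h0i h2i T
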